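/- arXiv:2001.01891 — 2 statements merged into one kernel-verified Lean document; each statement's English description precedes it below -/
import Mathlib

section
/- Optimality implies minimal regularized error: if σ* is a minimum-weight assignment (among assignments satisfying all hard clauses D_q) of the MaxSAT query, and every assignment obeying the hard clauses with σ(η_q)=1 exactly on misclassified samples is feasible, then the extracted rule R_{σ*} minimizes λ · |{q : R(X_q) ≠ y_q}| + HammingDist(R, R_{i-1}) over all k-clause CNF rules R over features x_1, …, x_m, where HammingDist counts the positions (j,l) at which membership of x_j in clause l differs between R and R_{i-1}. -/
open Finset

/-- Evaluation of the k-clause CNF rule encoded by selectors `B` on sample `q`. -/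
def ruleEval {k m n : ℕ} (X : Fin n → Fin m → Bool)
    (B : Fin k → Fin m → Bool) (q : Fin n) : Bool :=
  decide (∀ l : Fin k, ∃ j : Fin m, X q j = true ∧ B l j = true)

/-- An assignment `(B, η)` satisfies the hard clauses iff every sample with
noise variable false is classified correctly by the extracted rule. -/
def hardOK {k m n : ℕ} (X : Fin n → Fin m → Bool) (y : Fin n → Bool)
    (B : Fin k → Fin m → Bool) (η : Fin n → Bool) : Prop :=
  ∀ q : Fin n, η q = false → ruleEval X B q = y q

/-- Weight of an assignment: λ per unsatisfied `¬η_q` plus 1 per selector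
differing from the previous rule. -/
def cost {k m n : ℕ} (lam : ℕ) (prev B : Fin k → Fin m → Bool)
    (η : Fin n → Bool) : ℕ :=
  lam * (univ.filter (fun q : Fin n => η q = true)).card +
    (univ.filter (fun p : Fin k × Fin m => B p.1 p.2 ≠ prev p.1 p.2)).card

/-- Regularized objective of a rule: λ times its number of misclassified
samples plus its Hamming distance from the previous rule. -/
def objective {k m n : ℕ} (lam : ℕ) (X : Fin n → Fin m → Bool)
    (y : Fin n → Bool) (prev B : Fin k → Fin m → Bool) : ℕ :=
  lam * (univ.filter (fun q : Fin n => ruleEval X B q ≠ y q)).card +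
    (univ.filter (fun p : Fin k × Fin m => B p.1 p.2 ≠ prev p.1 p.2)).card

/-- Optimality implies minimal regularized error: the rule extracted from a
minimum-weight assignment of the MaxSAT query minimizes
`λ·#misclassified + HammingDist(·, R_{i-1})` over all k-clause CNF rules. -/
theorem maxsat_optimal_minimizes_objective {k m n : ℕ} (lam : ℕ) (hlam : 0 < lam)
    (X : Fin n → Fin m → Bool) (y : Fin n → Bool)
    (prev : Fin k → Fin m → Bool)
    (Bstar : Fin k → Fin m → Bool) (ηstar : Fin n → Bool)
    (hHard : hardOK X y Bstar ηstar)
    (hOpt : ∀ (B : Fin k → Fin m → Bool) (η : Fin n → Bool),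
      hardOK X y B η → cost lam prev Bstar ηstar ≤ cost lam prev B η) :
    ∀ B : Fin k → Fin m → Bool,
      objective lam X y prev Bstar ≤ objective lam X y prev B := by
  intro B
  set ηB : Fin n → Bool := fun q => decide (ruleEval X B q ≠ y q) with hηB
  have hhard : hardOK X y B ηB := by
    intro q hq
    by_contra h
    simp [hηB, h] at hq
  have h1 : objective lam X y prev Bstar ≤ cost lam prev Bstar ηstar := by
    unfold objective cost
    refine Nat.add_le_add_right (Nat.mul_le_mul_left _ (card_le_card ?_)) _
    intro q hq
    simp only [mem_filter, mem_univ, true_and] at *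
    by_contra hmem
    exact hq (hHard q (by simpa using hmem))
  have h2 : cost lam prev B ηB = objective lam X y prev B := by
    unfold objective cost
    have : (univ.filter (fun q : Fin n => ηB q = true)) =
        (univ.filter (fun q : Fin n => ruleEval X B q ≠ y q)) := by
      ext q; simp [hηB]
    rw [this]
  calc objective lam X y prev Bstar ≤ cost lam prev Bstar ηstar := h1
    _ ≤ cost lam prev B ηB := hOpt B ηB hhard
    _ = objective lam X y prev B := h2
end

section
/- For every assignment σ satisfying all hard clauses D_q, setting σ(η_q) = 0 whenever R_σ(X_q) = y_q yields another assignment σ' that also satisfies all hard clauses, extracts the same rule, and has weight at most that of σ; consequently some minimum-weight assignment has σ(η_q) = 1 exactly on the samples misclassified by the extracted rule. -/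
open Finset

/-- Resetting the noise variable to false on every correctly classified sample
preserves the hard clauses and extracted rule and does not increase the weight;
consequently some minimum-weight assignment has `η q = true` exactly on the
samples misclassified by the extracted rule. -/
theorem noise_reset_and_exact_minimum {k m n : ℕ} (lam : ℕ) (hlam : 0 < lam)
    (X : Fin n → Fin m → Bool) (y : Fin n → Bool)
    (prev : Fin k → Fin m → Bool) :
    (∀ (B : Fin k → Fin m → Bool) (η : Fin n → Bool), hardOK X y B η →
      hardOK X y B (fun q => if ruleEval X B q = y q then false else η q) ∧
      cost lam prev B (fun q => if ruleEval X B q = y q then false else η q)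
        ≤ cost lam prev B η) ∧
    (∃ (B₀ : Fin k → Fin m → Bool) (η₀ : Fin n → Bool),
      hardOK X y B₀ η₀ ∧
      (∀ (B : Fin k → Fin m → Bool) (η : Fin n → Bool),
        hardOK X y B η → cost lam prev B₀ η₀ ≤ cost lam prev B η) ∧
      (∀ q : Fin n, η₀ q = true ↔ ruleEval X B₀ q ≠ y q)) := by
  classical
  have key : ∀ (B : Fin k → Fin m → Bool) (η η' : Fin n → Bool),
      (∀ q, η' q = true → η q = true) →
      cost lam prev B η' ≤ cost lam prev B η := by
    intro B η η' hsub
    unfold cost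
    refine Nat.add_le_add_right (Nat.mul_le_mul_left _ ?_) _
    apply Finset.card_le_card
    intro q hq
    simp only [mem_filter, mem_univ, true_and] at *
    exact hsub q hq
  constructor
  · intro B η h
    refine ⟨?_, ?_⟩
    · intro q hq
      by_cases hc : ruleEval X B q = y q
      · exact hc
      · simp only [hc, if_false] at hq
        exact h q hq
    · apply key
      intro q hq
      by_cases hc : ruleEval X B q = y q
      · simp [hc] at hq
      · simpa [hc] using hq
  · have hne : (Finset.univ.filter
        (fun p : (Fin k → Fin m → Bool) × (Fin n → Bool) => hardOK X y p.1 p.2)).Nonempty := by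
      refine ⟨(prev, fun q => decide (ruleEval X prev q ≠ y q)), ?_⟩
      simp only [mem_filter, mem_univ, true_and]
      intro q hq
      simpa using hq
    obtain ⟨p, hp, hmin⟩ := Finset.exists_min_image _
      (fun p : (Fin k → Fin m → Bool) × (Fin n → Bool) => cost lam prev p.1 p.2) hne
    simp only [mem_filter, mem_univ, true_and] at hp
    refine ⟨p.1, fun q => decide (ruleEval X p.1 q ≠ y q), ?_, ?_, ?_⟩
    · intro q hq
      simpa using hq
    · intro B η h
      have h1 : cost lam prev p.1 (fun q => decide (ruleEval X p.1 q ≠ y q))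
          ≤ cost lam prev p.1 p.2 := by
        apply key
        intro q hq
        simp only [decide_eq_true_eq] at hq
        cases hη : p.2 q
        · exact absurd (hp q hη) hq
        · rfl
      have h2 := hmin (B, η) (by simp [h])
      exact le_trans h1 h2
    · intro q
      simp
end
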